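/- arXiv:1304.3555 — 4 statements merged into one kernel-verified Lean document; each statement's English description precedes it below -/
import Mathlib

section
/- Let (X_n)_{n≥0} be a transient, weakly symmetric, suffix-irreducible random walk on a regular language over a finite alphabet 𝒜. Let w₁ = a₁…a_m and w₂ = b₁…b_n be words of length ≥ 2 with a_i, b_j ∈ 𝒜 such that C([w₁]) = C([w₂]) (i.e. the cones C(w₁) and C(w₂) are isomorphic). Then the map φ: C(w₁) → C(w₂) defined by φ(a₁…a_{m−2} w̄) = b₁…b_{n−2} w̄ for every w̄ ∈ 𝒜* of length ≥ 2 with a₁…a_{m−2} w̄ ∈ C(w₁) is a well-defined bijection from C(w₁) onto C(w₂) which preserves the adjacency relation: for all w', w'' ∈ C(w₁), the one-step transition probability from w' to w'' is positive if and only if the one-step transition probability from φ(w') to φ(w'') is positive. -/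
open MeasureTheory Filter Topology
open scoped ENNReal Classical

/-- A random walk on a regular language over the finite alphabet `A`:
a Markov chain on finite words whose one-step transitions replace at most the last
two letters of the current word by a (nonempty, from long words) word of length at
most three, with probabilities `p` depending only on the last two letters of the
current word and on the replacing word. -/
structure RLRW (A : Type) [Fintype A] [DecidableEq A] where
  /-- the local transition probabilities -/
  p : List A → List A → ℝ
  /-- the full one-step transition probabilities between words -/
  step : List A → List A → ℝ
  step_nonneg : ∀ u v, 0 ≤ step u v
  step_hasSum : ∀ u, HasSum (step u) 1
  /-- from a word of length `≥ 2`, the last two letters are replaced by a word of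
  length `1`, `2` or `3`, with probability depending only on these data -/
  step_long : ∀ (w x y : List A), x.length = 2 → 1 ≤ y.length → y.length ≤ 3 →
    step (w ++ x) (w ++ y) = p x y
  /-- transitions from words of length `≤ 1` -/
  step_short : ∀ (x y : List A), x.length ≤ 1 → y.length ≤ x.length + 1 → step x y = p x y
  /-- no other transition is possible -/
  step_support : ∀ u v, 0 < step u v →
    ∃ w x y : List A, u = w ++ x ∧ v = w ++ y ∧ x.length = min u.length 2 ∧
      y.length ≤ x.length + 1 ∧ x.length ≤ y.length + 1

namespace RLRW

variable {A : Type} [Fintype A] [DecidableEq A]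

/-- `n`-step transition probabilities `p⁽ⁿ⁾(u,v)`. -/
noncomputable def pstep (M : RLRW A) : ℕ → List A → List A → ℝ
  | 0, u, v => if u = v then 1 else 0
  | (n + 1), u, v => ∑' w : List A, M.pstep n u w * M.step w v

/-- `n`-step transition probabilities where all the words visited at times `1,…,n`
are required to lie in the set `S`. -/
noncomputable def pstepIn (M : RLRW A) (S : Set (List A)) : ℕ → List A → List A → ℝ
  | 0, u, v => if u = v then 1 else 0
  | (n + 1), u, v => if v ∈ S then ∑' w : List A, M.pstepIn S n u w * M.step w v else 0

/-- The set `ℒ` of words accessible from the empty word. -/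
def Lang (M : RLRW A) : Set (List A) := {w | ∃ n, 0 < M.pstep n [] w}

/-- Weak symmetry of the random walk. -/
def WeaklySymmetric (M : RLRW A) : Prop := ∀ u v, 0 < M.step u v → 0 < M.step v u

/-- Suffix-irreducibility of the random walk. -/
def SuffixIrreducible (M : RLRW A) : Prop :=
  ∀ (w₀ : List A) (a₀ b₀ : A), w₀ ++ [a₀, b₀] ∈ M.Lang → ∀ a b : A,
    ∃ (n : ℕ) (w₁ : List A),
      0 < M.pstepIn {v | (w₀ ++ [a₀, b₀]).length ≤ v.length} n (w₀ ++ [a₀, b₀])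
          (w₀ ++ w₁ ++ [a, b])

/-- Transience of the random walk restricted to `ℒ` (finiteness of the Green function). -/
def Transient (M : RLRW A) : Prop := ∀ w ∈ M.Lang, Summable fun n => M.pstep n w w

/-- Recurrence of the random walk restricted to `ℒ`. -/
def Recurrent (M : RLRW A) : Prop := ∀ w ∈ M.Lang, ¬ Summable fun n => M.pstep n w w

/-- The entropy sequence `E[-log π_n(X_n)] = ∑_w π_n(w)·(-log π_n(w))`, where `π_n`
is the distribution of `X_n`. -/
noncomputable def entropySeq (M : RLRW A) (n : ℕ) : ℝ :=
  ∑' w : List A, M.pstep n [] w * (-Real.log (M.pstep n [] w))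

/-- `X` is (a version of) the random walk given by `M`, started at the empty word,
on the probability space `(Ω, P)`: its finite-dimensional distributions are the ones
prescribed by the one-step transition probabilities. -/
def IsRandomWalk (M : RLRW A) {Ω : Type} [MeasurableSpace Ω] (P : Measure Ω)
    (X : ℕ → Ω → List A) : Prop :=
  ∀ (n : ℕ) (w : ℕ → List A),
    P {ω | ∀ i ≤ n, X i ω = w i} =
      ENNReal.ofReal ((if w 0 = ([] : List A) then 1 else 0) *
        ∏ i ∈ Finset.range n, M.step (w i) (w (i + 1)))

/-- The word formed by the last two letters of `w`. -/
def lastTwo (w : List A) : List A := w.drop (w.length - 2)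

/-- The cone rooted at `w₀`: all words `w` of length `≥ |w₀|` reachable from `w₀` by a
path through words of length `≥ |w₀|`. -/
def Cone (M : RLRW A) (w₀ : List A) : Set (List A) :=
  {w | ∃ (n : ℕ) (f : ℕ → List A), f 0 = w₀ ∧ f n = w ∧
    (∀ i ≤ n, w₀.length ≤ (f i).length) ∧ ∀ i < n, 0 < M.step (f i) (f (i + 1))}

/-- The boundary `∂C(w)` of a cone. -/
def coneBoundary (M : RLRW A) (w : List A) : Set (List A) :=
  {w' | w' ∈ M.Cone w ∧ w'.length = w.length ∧ ∃ w'', w'' ∉ M.Cone w ∧ 0 < M.step w' w''}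

/-- The random walk is expanding if every cone rooted at a word of `ℒ` contains two
disjoint proper subcones rooted at words of `ℒ`. -/
def Expanding (M : RLRW A) : Prop :=
  ∀ w₀ ∈ M.Lang, 2 ≤ w₀.length →
    ∃ w₁ w₂ : List A, w₁ ∈ M.Lang ∧ w₂ ∈ M.Lang ∧ w₁ ∈ M.Cone w₀ ∧ w₂ ∈ M.Cone w₀ ∧
      M.Cone w₁ ⊂ M.Cone w₀ ∧ M.Cone w₂ ⊂ M.Cone w₀ ∧ M.Cone w₁ ∩ M.Cone w₂ = ∅

/-- Probability of a first visit to `v` at time exactly `n` (for `n ≥ 1`),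
starting from `u`. -/
noncomputable def firstVisit (M : RLRW A) : ℕ → List A → List A → ℝ
  | 0, _, _ => 0
  | 1, u, v => M.step u v
  | (n + 2), u, v => ∑' w : List A, if w = v then 0 else M.step u w * M.firstVisit (n + 1) w v

/-- The hitting probability `P[∃ n ≥ 0 : X_n = v | X_0 = u]`. -/
noncomputable def hitProb (M : RLRW A) (u v : List A) : ℝ :=
  if u = v then 1 else ∑' n : ℕ, M.firstVisit n u v

/-- The Greenian distance `d_Green(u,v) = - log P[∃ n ≥ 0 : X_n = v | X_0 = u]`. -/
noncomputable def dGreen (M : RLRW A) (u v : List A) : ℝ := -Real.log (M.hitProb u v)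

/-- The last-visit generating function `L(o,w|1)`. -/
noncomputable def lastVisitGF (M : RLRW A) (w : List A) : ℝ :=
  ∑' n : ℕ, M.pstepIn {v | v ≠ ([] : List A)} n [] w

end RLRW

/-!
A transition rewrites only the last two letters of a word, with a probability that depends only
on those letters. Along a path in `C(w)`, all words have length `≥ |w|`, so the first `|w| - 2`
letters are never touched: `C(w)` is `C([w])` with the prefix `w.take (|w| - 2)` prepended, and
the prefix has no influence on transitions. Swapping the prefix of `w₁` for that of `w₂` is
therefore an isomorphism `C(w₁) ≅ C([w₁]) = C([w₂]) ≅ C(w₂)`.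
-/

namespace List

theorem bijOn_replace_prefix {α : Type*} (P Q : List α) (k : ℕ) (hk : P.length = k)
    (C : Set (List α)) :
    Set.BijOn (fun u => Q ++ u.drop k) ((P ++ ·) '' C) ((Q ++ ·) '' C) := by
  subst hk
  refine ⟨?_, ?_, ?_⟩
  · rintro _ ⟨c, hc, rfl⟩
    exact ⟨c, hc, by simp⟩
  · rintro _ ⟨c, -, rfl⟩ _ ⟨d, -, rfl⟩ h
    simpa using h
  · rintro _ ⟨c, hc, rfl⟩
    exact ⟨P ++ c, ⟨c, hc, rfl⟩, by simp⟩

end List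

namespace RLRW

variable {A : Type} [Fintype A] [DecidableEq A] (M : RLRW A)

theorem exists_split_of_step_pos {u v : List A} (hu : 2 ≤ u.length) (h : 0 < M.step u v) :
    ∃ w x y : List A, u = w ++ x ∧ v = w ++ y ∧ x.length = 2 ∧ 1 ≤ y.length ∧
      y.length ≤ 3 := by
  obtain ⟨w, x, y, rfl, rfl, hx, hy, hxy⟩ := M.step_support _ _ h
  have hx2 : x.length = 2 := by rw [hx]; omega
  exact ⟨w, x, y, rfl, rfl, hx2, by omega, by omega⟩

theorem take_eq_of_step_pos {u v : List A} {k : ℕ} (hk : k + 2 ≤ u.length)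
    (h : 0 < M.step u v) : u.take k = v.take k := by
  obtain ⟨w, x, y, rfl, rfl, hx, -, -⟩ := M.exists_split_of_step_pos (by omega) h
  have hw : k ≤ w.length := by simp only [List.length_append] at hk; omega
  rw [List.take_append_of_le_length hw, List.take_append_of_le_length hw]

theorem step_append_left_eq_of_pos {P₁ P₂ s t : List A} (hs : 2 ≤ s.length)
    (h : 0 < M.step (P₁ ++ s) (P₁ ++ t)) :
    M.step (P₂ ++ s) (P₂ ++ t) = M.step (P₁ ++ s) (P₁ ++ t) := by
  obtain ⟨w, x, y, hu, hv, hx, hy₁, hy₃⟩ :=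
    M.exists_split_of_step_pos (by simp only [List.length_append]; omega) h
  have hs_split : (P₁ ++ s.take (s.length - 2)) ++ s.drop (s.length - 2) = w ++ x := by
    rw [List.append_assoc, List.take_append_drop, hu]
  obtain ⟨hw, rfl⟩ := List.append_inj' hs_split (by simp only [List.length_drop]; omega)
  have ht : t = s.take (s.length - 2) ++ y :=
    List.append_cancel_left (by rw [← List.append_assoc, hw, hv])
  have hstep (P : List A) : M.step (P ++ s) (P ++ t) = M.p (s.drop (s.length - 2)) y := by
    conv_lhs => rw [← List.take_append_drop (s.length - 2) s, ht, ← List.append_assoc,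
      ← List.append_assoc]
    exact M.step_long _ _ _ hx hy₁ hy₃
  rw [hstep, hstep]

theorem step_append_left (P : List A) {s : List A} (hs : 2 ≤ s.length) (t : List A) :
    M.step (P ++ s) (P ++ t) = M.step s t := by
  rcases (M.step_nonneg s t).eq_or_lt with h | h
  · rcases (M.step_nonneg (P ++ s) (P ++ t)).eq_or_lt with h' | h'
    · rw [← h, ← h']
    · simpa using (M.step_append_left_eq_of_pos (P₂ := []) hs h').symm
  · exact M.step_append_left_eq_of_pos (P₁ := []) hs h

/-- One step of a path inside the cone rooted at a word of length `n`. -/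
def StepAbove (n : ℕ) (u v : List A) : Prop := n ≤ u.length ∧ n ≤ v.length ∧ 0 < M.step u v

theorem mem_cone_iff {w₀ u : List A} :
    u ∈ M.Cone w₀ ↔ Relation.ReflTransGen (M.StepAbove w₀.length) w₀ u := by
  constructor
  · rintro ⟨n, f, rfl, rfl, hlen, hstep⟩
    suffices ∀ i ≤ n, Relation.ReflTransGen (M.StepAbove (f 0).length) (f 0) (f i) from
      this n le_rfl
    intro i
    induction i with
    | zero => exact fun _ => .refl
    | succ i ih =>
      exact fun hi => (ih (by omega)).tail ⟨hlen i (by omega), hlen (i + 1) hi, hstep i hi⟩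
  · intro h
    induction h with
    | refl => exact ⟨0, fun _ => w₀, rfl, rfl, fun _ _ => le_rfl, fun _ h => absurd h (by omega)⟩
    | @tail v u _ hvu ih =>
      obtain ⟨n, f, hf₀, rfl, hlen, hstep⟩ := ih
      refine ⟨n + 1, fun i => if i ≤ n then f i else u, by simp [hf₀], by simp, ?_, ?_⟩
      · intro i hi
        dsimp only
        split_ifs
        · exact hlen i ‹_›
        · exact hvu.2.1
      · intro i hi
        rcases Nat.lt_or_eq_of_le (Nat.le_of_lt_succ hi) with hi | rfl
        · simpa [hi.le, Nat.succ_le_of_lt hi] using hstep i hi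
        · simpa using hvu.2.2

theorem length_le_of_mem_cone {w₀ u : List A} (h : u ∈ M.Cone w₀) : w₀.length ≤ u.length := by
  obtain ⟨n, f, rfl, rfl, hlen, -⟩ := h
  exact hlen n le_rfl

theorem cone_append (P : List A) {s : List A} (hs : 2 ≤ s.length) :
    M.Cone (P ++ s) = (P ++ ·) '' M.Cone s := by
  ext u
  simp only [Set.mem_image, mem_cone_iff]
  constructor
  · intro h
    induction h with
    | refl => exact ⟨s, .refl, rfl⟩
    | @tail v u _ hvu ih =>
      obtain ⟨d, hd, rfl⟩ := ih
      have hd₂ : 2 ≤ d.length := by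
        have := hvu.1
        simp only [List.length_append] at this
        omega
      have hu : u = P ++ u.drop P.length := by
        have hpre := M.take_eq_of_step_pos (k := P.length)
          (by simp only [List.length_append]; omega) hvu.2.2
        rw [List.take_left] at hpre
        conv_lhs => rw [← List.take_append_drop P.length u, ← hpre]
      refine ⟨u.drop P.length, hd.tail ⟨?_, ?_, ?_⟩, hu.symm⟩
      · simpa using hvu.1
      · have := hvu.2.1
        simp only [List.length_append, List.length_drop] at this ⊢
        omega
      · rw [← M.step_append_left P hd₂, ← hu]
        exact hvu.2.2
  · rintro ⟨c, hc, rfl⟩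
    refine hc.lift (P ++ ·) fun v u ⟨hv, hu, hvu⟩ => ⟨by simpa using hv, by simpa using hu, ?_⟩
    rwa [M.step_append_left P (hs.trans hv)]

theorem cone_eq_image_lastTwo {w : List A} (hw : 2 ≤ w.length) :
    M.Cone w = (w.take (w.length - 2) ++ ·) '' M.Cone (lastTwo w) := by
  conv_lhs => rw [← List.take_append_drop (w.length - 2) w]
  exact M.cone_append _ (by simp only [List.length_drop]; omega)

end RLRW

theorem cone_isomorphism_general
    {A : Type} [Fintype A] [DecidableEq A] (M : RLRW A)
    (w₁ w₂ : List A) (h₁ : 2 ≤ w₁.length) (h₂ : 2 ≤ w₂.length)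
    (hiso : M.Cone (RLRW.lastTwo w₁) = M.Cone (RLRW.lastTwo w₂)) :
    (∀ u ∈ M.Cone w₁,
        u.take (w₁.length - 2) = w₁.take (w₁.length - 2) ∧
          2 ≤ (u.drop (w₁.length - 2)).length) ∧
    Set.BijOn (fun u : List A => w₂.take (w₂.length - 2) ++ u.drop (w₁.length - 2))
      (M.Cone w₁) (M.Cone w₂) ∧
    (∀ u ∈ M.Cone w₁, ∀ v ∈ M.Cone w₁,
      (0 < M.step u v ↔
        0 < M.step (w₂.take (w₂.length - 2) ++ u.drop (w₁.length - 2))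
              (w₂.take (w₂.length - 2) ++ v.drop (w₁.length - 2)))) := by
  set P := w₁.take (w₁.length - 2)
  set Q := w₂.take (w₂.length - 2)
  have hP : P.length = w₁.length - 2 := by simp only [P, List.length_take]; omega
  have hC₁ : M.Cone w₁ = (P ++ ·) '' _ := M.cone_eq_image_lastTwo h₁
  have hC₂ : M.Cone w₂ = (Q ++ ·) '' _ := M.cone_eq_image_lastTwo h₂
  have hc_length (c : List A) (hc : c ∈ M.Cone (RLRW.lastTwo w₁)) : 2 ≤ c.length :=
    le_trans (by simp only [RLRW.lastTwo, List.length_drop]; omega) (M.length_le_of_mem_cone hc)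
  rw [← hiso] at hC₂
  rw [hC₁, hC₂]
  refine ⟨?_, List.bijOn_replace_prefix P Q _ hP _, ?_⟩
  · rintro _ ⟨c, hc, rfl⟩
    rw [List.take_left' hP, List.drop_left' hP]
    exact ⟨rfl, hc_length c hc⟩
  · rintro _ ⟨c, hc, rfl⟩ _ ⟨d, -, rfl⟩
    simp only [List.drop_left' hP, M.step_append_left _ (hc_length c hc)]

/-- For a transient, weakly symmetric, suffix-irreducible random walk
on a regular language, if `w₁ = a₁…a_m` and `w₂ = b₁…b_n` are words of length `≥ 2`
whose cones are isomorphic (`C([w₁]) = C([w₂])`), then the map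
`φ(a₁…a_{m-2} w̄) = b₁…b_{n-2} w̄` is a well-defined bijection from `C(w₁)` onto
`C(w₂)` preserving the adjacency relation. -/
theorem cone_isomorphism
    {A : Type} [Fintype A] [DecidableEq A] (M : RLRW A)
    (hT : M.Transient) (hWS : M.WeaklySymmetric) (hSI : M.SuffixIrreducible)
    (w₁ w₂ : List A) (h₁ : 2 ≤ w₁.length) (h₂ : 2 ≤ w₂.length)
    (hiso : M.Cone (RLRW.lastTwo w₁) = M.Cone (RLRW.lastTwo w₂)) :
    (∀ u ∈ M.Cone w₁,
        u.take (w₁.length - 2) = w₁.take (w₁.length - 2) ∧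
          2 ≤ (u.drop (w₁.length - 2)).length) ∧
    Set.BijOn (fun u : List A => w₂.take (w₂.length - 2) ++ u.drop (w₁.length - 2))
      (M.Cone w₁) (M.Cone w₂) ∧
    (∀ u ∈ M.Cone w₁, ∀ v ∈ M.Cone w₁,
      (0 < M.step u v ↔
        0 < M.step (w₂.take (w₂.length - 2) ++ u.drop (w₁.length - 2))
              (w₂.take (w₂.length - 2) ++ v.drop (w₁.length - 2)))) :=
  cone_isomorphism_general M w₁ w₂ h₁ h₂ hiso
end

section
/- Let (V_k)_{k≥1} be a Markov chain on a finite state space S with an irreducible and aperiodic transition matrix Q, let ν be its unique stationary distribution, and let μ be an initial distribution with supp μ = S. Let T be a finite set, π: S × S → T a function, and Y_k = π(V_k, V_{k+1}). Suppose H ≥ 0 is such that for almost every realisation (y₁, y₂, …) of the stationary hidden chain Y_k^{(ν)} = π(V_k^{(ν)}, V_{k+1}^{(ν)}), lim_{k→∞} −(1/k) log P[Y₁^{(ν)} = y₁, …, Y_k^{(ν)} = y_k] = H. Then lim_{k→∞} −(1/k) ∫ log P[Y₁ = y₁, …, Y_k = y_k] dP(y₁, y₂, …) = H, where the integral is over the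 law of the trajectory (Y₁, Y₂, …). -/
/-!
Split `-(1/k) ∑ p_μ log p_μ` into `∑ p_μ(y) · (-(1/k) log p_ν(y))` minus
`(1/k) ∑ p_μ (log p_μ - log p_ν)`. Irreducibility makes `ν` strictly positive, so `μ` and `ν`,
and hence the path laws `p_μ` and `p_ν`, are comparable up to constant factors; the second term
is therefore `O(1/k)`. The sample entropy `-(1/k) log p_ν` is bounded on every path of positive
weight (such a path has weight at least `m r^k`, where `m` and `r` are the least positive values
of `ν` and `Q`), and it converges to `H` almost surely, hence in probability, for the stationary
chain. Bounded convergence in probability gives convergence in mean under `p_ν`, and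
`p_μ ≤ K p_ν` transfers it to `p_μ`.

The cylinder sets of the chain need not be measurable, but their outer measures add up to `1`,
which makes them null-measurable.
-/

open MeasureTheory Filter Topology

/-- `n`-step transition probabilities of the kernel `Q` on a finite state space. -/
noncomputable def Qpow {S : Type} [Fintype S] [DecidableEq S] (Q : S → S → ℝ) :
    ℕ → S → S → ℝ
  | 0, s, t => if s = t then 1 else 0
  | (n + 1), s, t => ∑ u : S, Qpow Q n s u * Q u t

/-- Irreducibility of the transition matrix `Q`. -/
def QIrreducible {S : Type} [Fintype S] [DecidableEq S] (Q : S → S → ℝ) : Prop :=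
  ∀ s t : S, ∃ n : ℕ, 1 ≤ n ∧ 0 < Qpow Q n s t

/-- Aperiodicity of the transition matrix `Q`. -/
def QAperiodic {S : Type} [Fintype S] [DecidableEq S] (Q : S → S → ℝ) : Prop :=
  ∀ s : S, ∃ N : ℕ, ∀ n, N ≤ n → 0 < Qpow Q n s s

/-- `P[Y₁ = y₁, …, Y_k = y_k]` for the hidden Markov chain `Y_k = f(V_k, V_{k+1})`,
where `(V_k)` is the Markov chain with initial distribution `μ` and kernel `Q`. -/
noncomputable def hmmProb {S T : Type} [Fintype S] [DecidableEq S] [DecidableEq T]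
    (μ : S → ℝ) (Q : S → S → ℝ) (f : S → S → T) (k : ℕ) (y : Fin k → T) : ℝ :=
  ∑ s : Fin (k + 1) → S,
    if ∀ i : Fin k, f (s i.castSucc) (s i.succ) = y i then
      μ (s 0) * ∏ i : Fin k, Q (s i.castSucc) (s i.succ)
    else 0

/-- `V` is (a version of) the Markov chain on the finite state space `S` with initial
distribution `μ` and transition matrix `Q`, realized on the probability space `(Ω, P)`. -/
def IsMarkovChain {S : Type} [Fintype S] [DecidableEq S] {Ω : Type} [MeasurableSpace Ω]
    (P : Measure Ω) (V : ℕ → Ω → S) (μ : S → ℝ) (Q : S → S → ℝ) : Prop :=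
  ∀ (n : ℕ) (s : ℕ → S),
    P {ω | ∀ i ≤ n, V i ω = s i} =
      ENNReal.ofReal (μ (s 0) * ∏ i ∈ Finset.range n, Q (s i) (s (i + 1)))

namespace MeasureTheory

variable {α β : Type*} {m : MeasurableSpace α} {μ : Measure α}

theorem nullMeasurableSet_of_measure_add_measure_compl_le [IsFiniteMeasure μ] {s : Set α}
    (h : μ s + μ sᶜ ≤ μ Set.univ) : NullMeasurableSet s μ := by
  set t := toMeasurable μ s
  set u := toMeasurable μ sᶜ
  have htu : t ∪ u = Set.univ := Set.eq_univ_of_subset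
    (Set.union_subset_union (subset_toMeasurable μ s) (subset_toMeasurable μ sᶜ))
    (Set.union_compl_self s)
  have hinter : μ (t ∩ u) = 0 := by
    have key := measure_union_add_inter (μ := μ) t (measurableSet_toMeasurable μ sᶜ)
    rw [htu, measure_toMeasurable, measure_toMeasurable] at key
    have : μ Set.univ + μ (t ∩ u) ≤ μ Set.univ + 0 := by rw [add_zero, key]; exact h
    exact nonpos_iff_eq_zero.1 ((ENNReal.add_le_add_iff_left (measure_ne_top μ _)).1 this)
  refine (measurableSet_toMeasurable μ s).nullMeasurableSet.congr (ae_eq_set.2 ⟨?_, ?_⟩)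
  · exact measure_mono_null
      (fun x hx => Set.mem_inter hx.1 (subset_toMeasurable μ sᶜ hx.2)) hinter
  · rw [Set.sdiff_eq_empty.2 (subset_toMeasurable μ s), measure_empty]

theorem nullMeasurableSet_preimage_singleton_of_sum_measure_le [IsFiniteMeasure μ] [Fintype β]
    [DecidableEq β] {g : α → β} (h : ∑ b, μ (g ⁻¹' {b}) ≤ μ Set.univ) (b : β) :
    NullMeasurableSet (g ⁻¹' {b}) μ := by
  refine nullMeasurableSet_of_measure_add_measure_compl_le (le_trans ?_ h)
  rw [← Finset.add_sum_erase _ _ (Finset.mem_univ b)]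
  gcongr
  calc μ (g ⁻¹' {b})ᶜ = μ (⋃ c ∈ Finset.univ.erase b, g ⁻¹' {c}) := by congr 1; ext; simp
    _ ≤ _ := measure_biUnion_finset_le _ _

theorem sum_measure_preimage_singleton₀ (s : Finset β) {g : α → β}
    (hg : ∀ b ∈ s, NullMeasurableSet (g ⁻¹' {b}) μ) :
    ∑ b ∈ s, μ (g ⁻¹' {b}) = μ (g ⁻¹' s) := by
  rw [← measure_biUnion_finset₀ ((Set.pairwiseDisjoint_fiber g s).mono' fun _ _ h => h.aedisjoint) hg,
    Finset.set_biUnion_preimage_singleton]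

theorem nullMeasurable_comp_of_nullMeasurableSet_preimage_singleton [Countable β] {γ : Type*}
    [MeasurableSpace γ] {g : α → β} (hg : ∀ b, NullMeasurableSet (g ⁻¹' {b}) μ) (φ : β → γ) :
    NullMeasurable (φ ∘ g) μ := by
  intro A _
  have : (φ ∘ g) ⁻¹' A = ⋃ b ∈ φ ⁻¹' A, g ⁻¹' {b} := by ext; simp
  rw [this]
  exact .biUnion (Set.to_countable _) fun b _ => hg b

end MeasureTheory

section RealBounds

theorem exists_pos_le_of_pos {α : Type*} [Finite α] (g : α → ℝ) :
    ∃ r > 0, ∀ a, 0 < g a → r ≤ g a := by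
  obtain ⟨M, hM⟩ := (Set.finite_range fun a => (g a)⁻¹).bddAbove
  refine ⟨(max M 1)⁻¹, by positivity, fun a ha => ?_⟩
  rw [inv_le_comm₀ (by positivity) ha]
  exact (hM ⟨a, rfl⟩).trans (le_max_left _ _)

theorem exists_le_mul_of_pos {α : Type*} [Finite α] (p : α → ℝ) {q : α → ℝ}
    (hq : ∀ a, 0 < q a) : ∃ K, ∀ a, p a ≤ K * q a := by
  obtain ⟨K, hK⟩ := (Set.finite_range fun a => p a / q a).bddAbove
  exact ⟨K, fun a => (div_le_iff₀ (hq a)).1 (hK ⟨a, rfl⟩)⟩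

theorem abs_log_sub_log_le {p q K L : ℝ} (hp : 0 < p) (hq : 0 < q) (hpq : p ≤ K * q)
    (hqp : q ≤ L * p) : |Real.log p - Real.log q| ≤ |Real.log K| + |Real.log L| := by
  have hK : 0 < K := pos_of_mul_pos_left (hp.trans_le hpq) hq.le
  have hL : 0 < L := pos_of_mul_pos_left (hq.trans_le hqp) hp.le
  have h₁ : Real.log p ≤ Real.log K + Real.log q := by
    rw [← Real.log_mul hK.ne' hq.ne']; exact Real.log_le_log hp hpq
  have h₂ : Real.log q ≤ Real.log L + Real.log p := by
    rw [← Real.log_mul hL.ne' hp.ne']; exact Real.log_le_log hq hqp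
  rw [abs_le]
  constructor <;> linarith [le_abs_self (Real.log K), le_abs_self (Real.log L),
    abs_nonneg (Real.log K), abs_nonneg (Real.log L)]

theorem abs_sum_mul_log_sub_log_le {ι : Type*} (s : Finset ι) {p q : ι → ℝ} {K L : ℝ}
    (hp : ∀ i, 0 ≤ p i) (hq : ∀ i, 0 ≤ q i) (hpq : ∀ i, p i ≤ K * q i)
    (hqp : ∀ i, q i ≤ L * p i) :
    |∑ i ∈ s, p i * (Real.log (p i) - Real.log (q i))|
      ≤ (|Real.log K| + |Real.log L|) * ∑ i ∈ s, p i := by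
  rw [Finset.mul_sum]
  refine (Finset.abs_sum_le_sum_abs _ _).trans (Finset.sum_le_sum fun i _ => ?_)
  rcases (hp i).eq_or_lt with h0 | hpos
  · simp [← h0]
  have hqpos : 0 < q i := (hq i).lt_of_ne fun h => by
    have := hpq i; rw [← h, mul_zero] at this; linarith
  rw [abs_mul, abs_of_pos hpos, mul_comm]
  exact mul_le_mul_of_nonneg_right (abs_log_sub_log_le hpos hqpos (hpq i) (hqp i)) hpos.le

theorem abs_one_div_mul_log_le {p m r : ℝ} {k : ℕ} (hm : 0 < m) (hr : 0 < r)
    (hlow : m * r ^ k ≤ p) (hp1 : p ≤ 1) :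
    |1 / (k : ℝ) * Real.log p| ≤ |Real.log m| + |Real.log r| := by
  have hp : 0 < p := (by positivity : 0 < m * r ^ k).trans_le hlow
  have hlog : Real.log m + k * Real.log r ≤ Real.log p := by
    rw [← Real.log_pow, ← Real.log_mul hm.ne' (by positivity)]
    exact Real.log_le_log (by positivity) hlow
  rcases k.eq_zero_or_pos with rfl | hk
  · simp only [CharP.cast_eq_zero, div_zero, zero_mul, abs_zero]; positivity
  have hk1 : (1 : ℝ) ≤ k := by exact_mod_cast hk
  rw [abs_mul, abs_of_pos (by positivity), abs_of_nonpos (Real.log_nonpos hp.le hp1), one_div,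
    inv_mul_le_iff₀ (by positivity)]
  nlinarith [neg_abs_le (Real.log m), neg_abs_le (Real.log r), abs_nonneg (Real.log m),
    mul_le_mul_of_nonneg_left (neg_abs_le (Real.log r)) (by positivity : (0 : ℝ) ≤ k)]

theorem sum_mul_abs_le_add_mul_sum_filter {ι : Type*} [Fintype ι] {a b g : ι → ℝ} {K C ε : ℝ}
    (ha : ∀ i, 0 ≤ a i) (hb : ∀ i, 0 ≤ b i) (ha1 : ∑ i, a i = 1) (hab : ∀ i, a i ≤ K * b i)
    (hg : ∀ i, 0 < b i → |g i| ≤ C) (hC : 0 ≤ C) (hε : 0 ≤ ε) :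
    ∑ i, a i * |g i| ≤ ε + K * C * ∑ i with ε ≤ |g i|, b i := by
  have hterm : ∀ i, a i * |g i| ≤ ε * a i + if ε ≤ |g i| then K * C * b i else 0 := by
    intro i
    split_ifs with hbad
    · have hle : a i * |g i| ≤ a i * C := by
        rcases (ha i).eq_or_lt with h0 | hpos
        · simp [← h0]
        · have hbpos : 0 < b i := by
            by_contra! h
            have := hab i
            rw [le_antisymm h (hb i), mul_zero] at this
            linarith
          exact mul_le_mul_of_nonneg_left (hg i hbpos) hpos.le
      nlinarith [mul_le_mul_of_nonneg_right (hab i) hC, mul_nonneg hε (ha i)]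
    · nlinarith [mul_le_mul_of_nonneg_left (not_le.1 hbad).le (ha i)]
  calc ∑ i, a i * |g i| ≤ ∑ i, (ε * a i + if ε ≤ |g i| then K * C * b i else 0) :=
        Finset.sum_le_sum fun i _ => hterm i
    _ = ε + K * C * ∑ i with ε ≤ |g i|, b i := by
        rw [Finset.sum_add_distrib, ← Finset.mul_sum, ha1, mul_one, Finset.sum_ite,
          Finset.sum_const_zero, add_zero, Finset.mul_sum]

theorem tendsto_sum_mul_abs_of_tendsto_sum_filter {ι : ℕ → Type*} [∀ k, Fintype (ι k)]
    {a b g : (k : ℕ) → ι k → ℝ} {K C : ℝ} (ha : ∀ k i, 0 ≤ a k i) (hb : ∀ k i, 0 ≤ b k i)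
    (ha1 : ∀ k, ∑ i, a k i = 1) (hab : ∀ k i, a k i ≤ K * b k i)
    (hg : ∀ k i, 0 < b k i → |g k i| ≤ C) (hC : 0 ≤ C)
    (hmass : ∀ ε > 0, Tendsto (fun k => ∑ i with ε ≤ |g k i|, b k i) atTop (𝓝 0)) :
    Tendsto (fun k => ∑ i, a k i * |g k i|) atTop (𝓝 0) := by
  refine tendsto_order.2 ⟨fun δ hδ => Eventually.of_forall fun k =>
    hδ.trans_le (Finset.sum_nonneg fun i _ => mul_nonneg (ha k i) (abs_nonneg _)), fun δ hδ => ?_⟩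
  have hsmall := ((hmass (δ / 2) (by positivity)).const_mul (K * C)).eventually_lt_const
    (show K * C * 0 < δ / 2 by rw [mul_zero]; positivity)
  filter_upwards [hsmall] with k hk
  exact (sum_mul_abs_le_add_mul_sum_filter (ha k) (hb k) (ha1 k) (hab k) (hg k) hC
    (ε := δ / 2) (by positivity)).trans_lt (by linarith)

end RealBounds

section Stationary

variable {S : Type} [Fintype S] [DecidableEq S]

theorem Qpow_nonneg {Q : S → S → ℝ} (hQ0 : ∀ s t, 0 ≤ Q s t) :
    ∀ (n : ℕ) (s t : S), 0 ≤ Qpow Q n s t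
  | 0, s, t => by rw [Qpow]; split_ifs <;> norm_num
  | n + 1, s, t => Finset.sum_nonneg fun u _ => mul_nonneg (Qpow_nonneg hQ0 n s u) (hQ0 u t)

theorem sum_mul_Qpow_of_stationary {Q : S → S → ℝ} {ν : S → ℝ}
    (hν : ∀ t, ∑ s, ν s * Q s t = ν t) : ∀ (n : ℕ) (t : S), ∑ s, ν s * Qpow Q n s t = ν t
  | 0, t => by simp [Qpow]
  | n + 1, t => by
    simp only [Qpow, Finset.mul_sum]
    rw [Finset.sum_comm]
    simp_rw [← mul_assoc, ← Finset.sum_mul, sum_mul_Qpow_of_stationary hν n, hν]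

theorem pos_of_stationary_of_irreducible {Q : S → S → ℝ} {ν : S → ℝ} (hQ0 : ∀ s t, 0 ≤ Q s t)
    (hirr : QIrreducible Q) (hν0 : ∀ s, 0 ≤ ν s) (hν1 : ∑ s, ν s = 1)
    (hν : ∀ t, ∑ s, ν s * Q s t = ν t) (t : S) : 0 < ν t := by
  obtain ⟨s₀, hs₀⟩ : ∃ s₀, 0 < ν s₀ := by
    by_contra! h
    linarith [Finset.sum_nonpos fun s (_ : s ∈ Finset.univ) => h s]
  obtain ⟨n, -, hn⟩ := hirr s₀ t
  rw [← sum_mul_Qpow_of_stationary hν n t]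
  exact (mul_pos hs₀ hn).trans_le (Finset.single_le_sum
    (fun s _ => mul_nonneg (hν0 s) (Qpow_nonneg hQ0 n s t)) (Finset.mem_univ s₀))

end Stationary

section Paths

variable {S T : Type}

noncomputable def pathWeight (μ : S → ℝ) (Q : S → S → ℝ) (k : ℕ) (s : Fin (k + 1) → S) : ℝ :=
  μ (s 0) * ∏ i : Fin k, Q (s i.castSucc) (s i.succ)

def observe (f : S → S → T) (k : ℕ) (s : Fin (k + 1) → S) : Fin k → T :=
  fun i => f (s i.castSucc) (s i.succ)

variable {μ ν : S → ℝ} {Q : S → S → ℝ} {f : S → S → T} {K : ℝ}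

theorem pathWeight_nonneg (hμ0 : ∀ s, 0 ≤ μ s) (hQ0 : ∀ s t, 0 ≤ Q s t) (k : ℕ)
    (s : Fin (k + 1) → S) : 0 ≤ pathWeight μ Q k s :=
  mul_nonneg (hμ0 _) (Finset.prod_nonneg fun _ _ => hQ0 _ _)

theorem pathWeight_snoc (k : ℕ) (s : Fin (k + 1) → S) (t : S) :
    pathWeight μ Q (k + 1) (Fin.snoc s t) = pathWeight μ Q k s * Q (s (Fin.last k)) t := by
  simp [pathWeight, Fin.prod_univ_castSucc, mul_assoc, Fin.succ_castSucc, -Fin.castSucc_succ]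

theorem sum_pathWeight [Fintype S] (hQ1 : ∀ s, ∑ t, Q s t = 1) :
    ∀ k : ℕ, ∑ s : Fin (k + 1) → S, pathWeight μ Q k s = ∑ a, μ a
  | 0 => by simp [pathWeight, ← (Equiv.funUnique (Fin 1) S).symm.sum_comp]
  | k + 1 => by
    rw [← (Fin.snocEquiv fun _ => S).sum_comp, Fintype.sum_prod_type_right]
    change ∑ s, ∑ t, pathWeight μ Q (k + 1) (Fin.snoc s t) = _
    simp only [pathWeight_snoc, ← Finset.mul_sum, hQ1, mul_one]
    exact sum_pathWeight hQ1 k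

theorem pathWeight_le_mul (hK : ∀ a, μ a ≤ K * ν a) (hQ0 : ∀ s t, 0 ≤ Q s t) (k : ℕ)
    (s : Fin (k + 1) → S) : pathWeight μ Q k s ≤ K * pathWeight ν Q k s := by
  rw [pathWeight, pathWeight, ← mul_assoc]
  exact mul_le_mul_of_nonneg_right (hK _) (Finset.prod_nonneg fun _ _ => hQ0 _ _)

theorem mul_pow_le_pathWeight {m r : ℝ} (hm : ∀ a, 0 < μ a → m ≤ μ a)
    (hr : ∀ a b, 0 < Q a b → r ≤ Q a b) (hr0 : 0 ≤ r) (hQ0 : ∀ s t, 0 ≤ Q s t) {k : ℕ}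
    {s : Fin (k + 1) → S} (hs : 0 < pathWeight μ Q k s) : m * r ^ k ≤ pathWeight μ Q k s := by
  have hprod : 0 < ∏ i : Fin k, Q (s i.castSucc) (s i.succ) :=
    (Finset.prod_nonneg fun _ _ => hQ0 _ _).lt_of_ne fun h => by
      rw [pathWeight, ← h, mul_zero] at hs; exact hs.false
  have hμs : 0 < μ (s 0) := pos_of_mul_pos_left hs hprod.le
  have hpow : r ^ k ≤ ∏ i : Fin k, Q (s i.castSucc) (s i.succ) := by
    simpa using Finset.prod_le_prod (s := Finset.univ) (fun _ _ => hr0) fun i _ =>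
      hr _ _ ((hQ0 _ _).lt_of_ne (Finset.prod_ne_zero_iff.1 hprod.ne' i (Finset.mem_univ _)).symm)
  exact mul_le_mul (hm _ hμs) hpow (pow_nonneg hr0 k) hμs.le

variable [Fintype S] [DecidableEq S] [DecidableEq T]

noncomputable def sampleEntropy (μ : S → ℝ) (Q : S → S → ℝ) (f : S → S → T) (k : ℕ)
    (y : Fin k → T) : ℝ :=
  -(1 / (k : ℝ)) * Real.log (hmmProb μ Q f k y)

theorem hmmProb_eq_sum_pathWeight (k : ℕ) (y : Fin k → T) :
    hmmProb μ Q f k y = ∑ s with observe f k s = y, pathWeight μ Q k s := by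
  rw [hmmProb, Finset.sum_filter]
  simp only [observe, funext_iff, pathWeight]

theorem sum_hmmProb_mul [Fintype T] (k : ℕ) (φ : (Fin k → T) → ℝ) :
    ∑ y, hmmProb μ Q f k y * φ y = ∑ s, pathWeight μ Q k s * φ (observe f k s) := by
  simp_rw [hmmProb_eq_sum_pathWeight, Finset.sum_mul]
  rw [← Finset.sum_fiberwise Finset.univ (observe f k)]
  refine Finset.sum_congr rfl fun y _ => Finset.sum_congr rfl fun s hs => ?_
  rw [(Finset.mem_filter.1 hs).2]

theorem sum_hmmProb [Fintype T] (hQ1 : ∀ s, ∑ t, Q s t = 1) (k : ℕ) :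
    ∑ y, hmmProb μ Q f k y = ∑ a, μ a := by
  simpa [sum_pathWeight hQ1] using sum_hmmProb_mul (μ := μ) (Q := Q) (f := f) k fun _ => 1

theorem hmmProb_nonneg (hμ0 : ∀ s, 0 ≤ μ s) (hQ0 : ∀ s t, 0 ≤ Q s t) (k : ℕ) (y : Fin k → T) :
    0 ≤ hmmProb μ Q f k y := by
  rw [hmmProb_eq_sum_pathWeight]
  exact Finset.sum_nonneg fun s _ => pathWeight_nonneg hμ0 hQ0 k s

theorem pathWeight_le_hmmProb_observe (hμ0 : ∀ s, 0 ≤ μ s) (hQ0 : ∀ s t, 0 ≤ Q s t) (k : ℕ)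
    (s : Fin (k + 1) → S) : pathWeight μ Q k s ≤ hmmProb μ Q f k (observe f k s) := by
  rw [hmmProb_eq_sum_pathWeight]
  exact Finset.single_le_sum (fun s _ => pathWeight_nonneg hμ0 hQ0 k s)
    (Finset.mem_filter.2 ⟨Finset.mem_univ s, rfl⟩)

theorem hmmProb_le_sum (hμ0 : ∀ s, 0 ≤ μ s) (hQ0 : ∀ s t, 0 ≤ Q s t)
    (hQ1 : ∀ s, ∑ t, Q s t = 1) (k : ℕ) (y : Fin k → T) : hmmProb μ Q f k y ≤ ∑ a, μ a := by
  rw [hmmProb_eq_sum_pathWeight, ← sum_pathWeight hQ1 k]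
  exact Finset.sum_le_sum_of_subset_of_nonneg (Finset.filter_subset _ _)
    fun s _ _ => pathWeight_nonneg hμ0 hQ0 k s

theorem hmmProb_le_mul (hK : ∀ a, μ a ≤ K * ν a) (hQ0 : ∀ s t, 0 ≤ Q s t) (k : ℕ)
    (y : Fin k → T) : hmmProb μ Q f k y ≤ K * hmmProb ν Q f k y := by
  rw [hmmProb_eq_sum_pathWeight, hmmProb_eq_sum_pathWeight, Finset.mul_sum]
  exact Finset.sum_le_sum fun s _ => pathWeight_le_mul hK hQ0 k s

theorem exists_abs_sampleEntropy_observe_le (hν0 : ∀ s, 0 ≤ ν s) (hν1 : ∑ s, ν s = 1)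
    (hQ0 : ∀ s t, 0 ≤ Q s t) (hQ1 : ∀ s, ∑ t, Q s t = 1) :
    ∃ C, 0 ≤ C ∧ ∀ k s, 0 < pathWeight ν Q k s →
      |sampleEntropy ν Q f k (observe f k s)| ≤ C := by
  obtain ⟨m, hm0, hm⟩ := exists_pos_le_of_pos ν
  obtain ⟨r, hr0, hr⟩ := exists_pos_le_of_pos fun st : S × S => Q st.1 st.2
  refine ⟨|Real.log m| + |Real.log r|, by positivity, fun k s hs => ?_⟩
  rw [sampleEntropy, neg_mul, abs_neg]
  refine abs_one_div_mul_log_le hm0 hr0 ?_ (hν1 ▸ hmmProb_le_sum hν0 hQ0 hQ1 k _)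
  exact (mul_pow_le_pathWeight hm (fun a b => hr (a, b)) hr0.le hQ0 hs).trans
    (pathWeight_le_hmmProb_observe hν0 hQ0 k s)

end Paths

section Trajectory

variable {S : Type} [Fintype S] [DecidableEq S] {Ω : Type} [MeasurableSpace Ω] {P : Measure Ω}
  {V : ℕ → Ω → S} {ν : S → ℝ} {Q : S → S → ℝ}

def trajectory (V : ℕ → Ω → S) (k : ℕ) (ω : Ω) : Fin (k + 1) → S := fun i => V i ω

theorem IsMarkovChain.measure_trajectory_preimage_singleton (hV : IsMarkovChain P V ν Q)
    (k : ℕ) (s : Fin (k + 1) → S) :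
    P (trajectory V k ⁻¹' {s}) = ENNReal.ofReal (pathWeight ν Q k s) := by
  have hset : trajectory V k ⁻¹' {s} = {ω | ∀ i ≤ k, V i ω = s (Fin.ofNat (k + 1) i)} := by
    ext ω
    simp only [Set.mem_preimage, Set.mem_singleton_iff, funext_iff, trajectory, Set.mem_ofPred_eq]
    constructor
    · intro h i hi
      simpa [Nat.mod_eq_of_lt (Nat.lt_succ_of_le hi)] using h (Fin.ofNat (k + 1) i)
    · intro h i
      simpa using h i (Nat.lt_succ_iff.1 i.isLt)
  rw [hset, hV k (fun n => s (Fin.ofNat (k + 1) n)), pathWeight, ← Fin.prod_univ_eq_prod_range]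
  have hcast (i : Fin k) : Fin.ofNat (k + 1) i = i.castSucc :=
    Fin.ext (Nat.mod_eq_of_lt (Nat.lt_succ_of_lt i.isLt))
  have hsucc (i : Fin k) : Fin.ofNat (k + 1) (i + 1) = i.succ :=
    Fin.ext (Nat.mod_eq_of_lt (Nat.succ_lt_succ i.isLt))
  simp only [hcast, hsucc]
  rfl

theorem IsMarkovChain.nullMeasurableSet_trajectory_preimage_singleton [IsProbabilityMeasure P]
    (hV : IsMarkovChain P V ν Q) (hν0 : ∀ s, 0 ≤ ν s) (hν1 : ∑ s, ν s = 1)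
    (hQ0 : ∀ s t, 0 ≤ Q s t) (hQ1 : ∀ s, ∑ t, Q s t = 1) (k : ℕ) (s : Fin (k + 1) → S) :
    NullMeasurableSet (trajectory V k ⁻¹' {s}) P := by
  refine nullMeasurableSet_preimage_singleton_of_sum_measure_le (le_of_eq ?_) s
  simp_rw [hV.measure_trajectory_preimage_singleton, measure_univ]
  rw [← ENNReal.ofReal_sum_of_nonneg fun s _ => pathWeight_nonneg hν0 hQ0 k s,
    sum_pathWeight hQ1, hν1, ENNReal.ofReal_one]

theorem IsMarkovChain.tendsto_sum_pathWeight_filter_of_tendsto_ae [IsProbabilityMeasure P]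
    (hV : IsMarkovChain P V ν Q) (hν0 : ∀ s, 0 ≤ ν s) (hν1 : ∑ s, ν s = 1)
    (hQ0 : ∀ s t, 0 ≤ Q s t) (hQ1 : ∀ s, ∑ t, Q s t = 1)
    {φ : (k : ℕ) → (Fin (k + 1) → S) → ℝ} {H : ℝ}
    (hφ : ∀ᵐ ω ∂P, Tendsto (fun k => φ k (trajectory V k ω)) atTop (𝓝 H)) {ε : ℝ} (hε : 0 < ε) :
    Tendsto (fun k => ∑ s with ε ≤ |φ k s - H|, pathWeight ν Q k s) atTop (𝓝 0) := by
  have hfibre := hV.nullMeasurableSet_trajectory_preimage_singleton hν0 hν1 hQ0 hQ1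
  have hmeas (k : ℕ) : AEStronglyMeasurable (fun ω => φ k (trajectory V k ω)) P :=
    (nullMeasurable_comp_of_nullMeasurableSet_preimage_singleton (hfibre k) (φ k)).aemeasurable
      |>.aestronglyMeasurable
  have hbad (k : ℕ) : {ω | ENNReal.ofReal ε ≤ edist (φ k (trajectory V k ω)) H}
      = trajectory V k ⁻¹' ↑(Finset.univ.filter fun s => ε ≤ |φ k s - H|) := by
    ext ω
    simp [edist_dist, Real.dist_eq, ENNReal.ofReal_le_ofReal_iff (abs_nonneg _)]
  have hinm := tendstoInMeasure_of_tendsto_ae hmeas hφ (ENNReal.ofReal ε) (by simpa using hε)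
  simp_rw [hbad, ← sum_measure_preimage_singleton₀ _ fun s _ => hfibre _ s,
    hV.measure_trajectory_preimage_singleton, ← ENNReal.ofReal_sum_of_nonneg fun s _ =>
      pathWeight_nonneg hν0 hQ0 _ s] at hinm
  refine ((ENNReal.tendsto_toReal ENNReal.zero_ne_top).comp hinm).congr fun k => ?_
  exact ENNReal.toReal_ofReal (Finset.sum_nonneg fun s _ => pathWeight_nonneg hν0 hQ0 k s)

end Trajectory

section HiddenMarkov

variable {S T : Type} [Fintype S] [DecidableEq S] [Fintype T] [DecidableEq T]
  {μ ν : S → ℝ} {Q : S → S → ℝ} {f : S → S → T}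

theorem tendsto_sum_hmmProb_mul_sampleEntropy {K H : ℝ} (hμ0 : ∀ s, 0 ≤ μ s)
    (hμ1 : ∑ s, μ s = 1) (hν0 : ∀ s, 0 ≤ ν s) (hν1 : ∑ s, ν s = 1) (hK : ∀ s, μ s ≤ K * ν s)
    (hQ0 : ∀ s t, 0 ≤ Q s t) (hQ1 : ∀ s, ∑ t, Q s t = 1)
    (hmass : ∀ ε > 0, Tendsto (fun k => ∑ s with ε ≤ |sampleEntropy ν Q f k (observe f k s) - H|,
      pathWeight ν Q k s) atTop (𝓝 0)) :
    Tendsto (fun k => ∑ y, hmmProb μ Q f k y * sampleEntropy ν Q f k y) atTop (𝓝 H) := by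
  obtain ⟨C, hC0, hC⟩ := exists_abs_sampleEntropy_observe_le (f := f) hν0 hν1 hQ0 hQ1
  have hL1 := tendsto_sum_mul_abs_of_tendsto_sum_filter (pathWeight_nonneg hμ0 hQ0)
    (pathWeight_nonneg hν0 hQ0) (fun k => (sum_pathWeight hQ1 k).trans hμ1)
    (pathWeight_le_mul hK hQ0) (C := C + |H|)
    (fun k s hs => (abs_sub _ _).trans (add_le_add (hC k s hs) le_rfl)) (by positivity) hmass
  refine tendsto_iff_norm_sub_tendsto_zero.2
    (squeeze_zero (fun _ => norm_nonneg _) (fun k => ?_) hL1)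
  have hw1 : ∑ s, pathWeight μ Q k s = 1 := (sum_pathWeight hQ1 k).trans hμ1
  rw [sum_hmmProb_mul, Real.norm_eq_abs]
  calc |∑ s, pathWeight μ Q k s * sampleEntropy ν Q f k (observe f k s) - H|
      = |∑ s, pathWeight μ Q k s * (sampleEntropy ν Q f k (observe f k s) - H)| := by
        simp [mul_sub, ← Finset.sum_mul, hw1]
    _ ≤ ∑ s, pathWeight μ Q k s * |sampleEntropy ν Q f k (observe f k s) - H| := by
        refine (Finset.abs_sum_le_sum_abs _ _).trans_eq (Finset.sum_congr rfl fun s _ => ?_)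
        rw [abs_mul, abs_of_nonneg (pathWeight_nonneg hμ0 hQ0 k s)]

theorem tendsto_one_div_mul_sum_hmmProb_mul_log_sub_log {K L : ℝ} (hμ0 : ∀ s, 0 ≤ μ s)
    (hμ1 : ∑ s, μ s = 1) (hν0 : ∀ s, 0 ≤ ν s) (hK : ∀ s, μ s ≤ K * ν s)
    (hL : ∀ s, ν s ≤ L * μ s) (hQ0 : ∀ s t, 0 ≤ Q s t) (hQ1 : ∀ s, ∑ t, Q s t = 1) :
    Tendsto (fun k : ℕ => 1 / (k : ℝ) * ∑ y, hmmProb μ Q f k y *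
      (Real.log (hmmProb μ Q f k y) - Real.log (hmmProb ν Q f k y))) atTop (𝓝 0) := by
  refine squeeze_zero_norm (fun k => ?_)
    (tendsto_const_div_atTop_nhds_zero_nat (|Real.log K| + |Real.log L|))
  rw [Real.norm_eq_abs, abs_mul, abs_of_nonneg (by positivity), one_div_mul_eq_div]
  gcongr
  have := abs_sum_mul_log_sub_log_le (p := hmmProb μ Q f k) (q := hmmProb ν Q f k) Finset.univ
    (hmmProb_nonneg hμ0 hQ0 k) (hmmProb_nonneg hν0 hQ0 k) (hmmProb_le_mul hK hQ0 k)
    (hmmProb_le_mul hL hQ0 k)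
  rwa [sum_hmmProb hQ1, hμ1, mul_one] at this

end HiddenMarkov

theorem hmm_entropy_expectation_general
    {S T : Type} [Fintype S] [DecidableEq S] [Fintype T] [DecidableEq T]
    (Q : S → S → ℝ) (hQ0 : ∀ s t, 0 ≤ Q s t) (hQ1 : ∀ s, ∑ t, Q s t = 1)
    (hirr : QIrreducible Q)
    (ν : S → ℝ) (hν0 : ∀ s, 0 ≤ ν s) (hν1 : ∑ s, ν s = 1)
    (hνstat : ∀ t, ∑ s, ν s * Q s t = ν t)
    (μ : S → ℝ) (hμ0 : ∀ s, 0 < μ s) (hμ1 : ∑ s, μ s = 1)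
    (f : S → S → T)
    {Ω' : Type} [MeasurableSpace Ω'] (P' : Measure Ω') [IsProbabilityMeasure P']
    (V' : ℕ → Ω' → S) (hV' : IsMarkovChain P' V' ν Q)
    (H : ℝ)
    (hstat : ∀ᵐ ω ∂P',
      Filter.Tendsto
        (fun k : ℕ => -(1 / (k : ℝ)) *
          Real.log (hmmProb ν Q f k (fun i : Fin k => f (V' (i : ℕ) ω) (V' ((i : ℕ) + 1) ω))))
        Filter.atTop (nhds H)) :
    Filter.Tendsto
      (fun k : ℕ => -(1 / (k : ℝ)) *
        ∑ y : Fin k → T, hmmProb μ Q f k y * Real.log (hmmProb μ Q f k y))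
      Filter.atTop (nhds H) := by
  have hν t := pos_of_stationary_of_irreducible hQ0 hirr hν0 hν1 hνstat t
  have hμ0' s := (hμ0 s).le
  obtain ⟨K, hK⟩ := exists_le_mul_of_pos μ hν
  obtain ⟨L, hL⟩ := exists_le_mul_of_pos ν hμ0
  have hmain := tendsto_sum_hmmProb_mul_sampleEntropy (f := f) hμ0' hμ1 hν0 hν1 hK hQ0 hQ1
    fun ε hε => hV'.tendsto_sum_pathWeight_filter_of_tendsto_ae hν0 hν1 hQ0 hQ1
      (φ := fun k s => sampleEntropy ν Q f k (observe f k s)) hstat hε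
  have herr := tendsto_one_div_mul_sum_hmmProb_mul_log_sub_log (f := f) hμ0' hμ1 hν0 hK hL hQ0 hQ1
  convert hmain.sub herr using 1
  · funext k
    simp only [sampleEntropy, Finset.mul_sum, ← Finset.sum_sub_distrib]
    exact Finset.sum_congr rfl fun y _ => by ring
  · rw [sub_zero]

/-- Let `(V_k)` be a Markov chain on a finite state space with an
irreducible and aperiodic transition matrix `Q`, stationary distribution `ν`, and an
initial distribution `μ` of full support. If, for the stationary hidden Markov chain
`Y_k^{(ν)} = f(V_k^{(ν)}, V_{k+1}^{(ν)})`, almost every realisation satisfies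
`-(1/k) log P[Y₁^{(ν)} = y₁, …, Y_k^{(ν)} = y_k] → H`, then also
`-(1/k) ∫ log P[Y₁ = y₁, …, Y_k = y_k] dP(y₁,y₂,…) → H` for the hidden chain `Y`
with initial distribution `μ`. -/
theorem hmm_entropy_expectation
    {S T : Type} [Fintype S] [DecidableEq S] [Nonempty S] [Fintype T] [DecidableEq T]
    (Q : S → S → ℝ) (hQ0 : ∀ s t, 0 ≤ Q s t) (hQ1 : ∀ s, ∑ t, Q s t = 1)
    (hirr : QIrreducible Q) (hap : QAperiodic Q)
    (ν : S → ℝ) (hν0 : ∀ s, 0 ≤ ν s) (hν1 : ∑ s, ν s = 1)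
    (hνstat : ∀ t, ∑ s, ν s * Q s t = ν t)
    (μ : S → ℝ) (hμ0 : ∀ s, 0 < μ s) (hμ1 : ∑ s, μ s = 1)
    (f : S → S → T)
    {Ω' : Type} [MeasurableSpace Ω'] (P' : Measure Ω') [IsProbabilityMeasure P']
    (V' : ℕ → Ω' → S) (hV' : IsMarkovChain P' V' ν Q)
    (H : ℝ) (hH : 0 ≤ H)
    (hstat : ∀ᵐ ω ∂P',
      Filter.Tendsto
        (fun k : ℕ => -(1 / (k : ℝ)) *
          Real.log (hmmProb ν Q f k (fun i : Fin k => f (V' (i : ℕ) ω) (V' ((i : ℕ) + 1) ω))))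
        Filter.atTop (nhds H)) :
    Filter.Tendsto
      (fun k : ℕ => -(1 / (k : ℝ)) *
        ∑ y : Fin k → T, hmmProb μ Q f k y * Real.log (hmmProb μ Q f k y))
      Filter.atTop (nhds H) :=
  hmm_entropy_expectation_general Q hQ0 hQ1 hirr ν hν0 hν1 hνstat μ hμ0 hμ1 f P' V' hV' H hstat
end

section
/- Let (X_n)_{n≥0} be a transient, weakly symmetric, suffix-irreducible random walk on a regular language over a finite alphabet 𝒜, let R > 1 be such that G(w₁, w₂ | R) < ∞ for all w₁, w₂ ∈ ℒ, and fix ϱ ∈ [1, R). Then there exist constants D₁, D₂ > 0 such that for all m, n ∈ ℕ₀ and every word w ∈ ℒ with P[X_n = w] > 0, the m-step transition probability satisfies p^{(m)}(o, w) ≤ D₁·D₂ⁿ·ϱ^{−m}. -/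
/-!
Weak symmetry lets every path be reversed step by step, and the positive one-step
probabilities are bounded below by some `ε > 0` because they take only finitely many values.
So if `p⁽ⁿ⁾(o,w) > 0` then `p⁽ⁿ⁾(w,o) ≥ εⁿ`, and
`p⁽ᵐ⁾(o,w) εⁿ Rᵐ⁺ⁿ ≤ p⁽ᵐ⁺ⁿ⁾(o,o) Rᵐ⁺ⁿ ≤ G(o,o|R)`, which gives the bound with
`D₁ = G(o,o|R)` and `D₂ = (Rε)⁻¹` since `ϱ ≤ R`.
-/

open MeasureTheory Filter Topology
open scoped ENNReal Classical

theorem HasSum.tsum_mul_of_hasSum_one {α β : Type*} {p : α → ℝ} {k : α → β → ℝ} {a : ℝ}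
    (hp0 : ∀ x, 0 ≤ p x) (hk0 : ∀ x y, 0 ≤ k x y) (hp : HasSum p a)
    (hk : ∀ x, HasSum (k x) 1) : HasSum (fun y => ∑' x, p x * k x y) a := by
  set f : α × β → ℝ := fun q => p q.1 * k q.1 q.2
  have hrow : ∀ x, HasSum (fun y => f (x, y)) (p x) := fun x => by
    simpa using (hk x).mul_left (p x)
  have hf : Summable f :=
    (summable_prod_of_nonneg fun q => mul_nonneg (hp0 q.1) (hk0 q.1 q.2)).2
      ⟨fun x => (hrow x).summable, hp.summable.congr fun x => ((hrow x).tsum_eq).symm⟩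
  have hfa : HasSum f a := (hf.hasSum.prod_fiberwise hrow).unique hp ▸ hf.hasSum
  have hswap : HasSum (fun q : β × α => f q.swap) a := (Equiv.prodComm β α).hasSum_iff.2 hfa
  exact hswap.prod_fiberwise fun y => (hswap.summable.prod_factor y).hasSum

namespace RLRW

variable {A : Type} [Fintype A] [DecidableEq A] (M : RLRW A)

lemma step_le_one (u v : List A) : M.step u v ≤ 1 :=
  le_hasSum (M.step_hasSum u) v fun w _ => M.step_nonneg u w

lemma pstep_one (u v : List A) : M.pstep 1 u v = M.step u v := by
  rw [pstep, tsum_eq_single u fun w hw => by simp [pstep, Ne.symm hw]]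
  simp [pstep]

lemma pstep_nonneg (n : ℕ) (u v : List A) : 0 ≤ M.pstep n u v := by
  induction n generalizing v with
  | zero => rw [pstep]; positivity
  | succ n ih => exact tsum_nonneg fun w => mul_nonneg (ih w) (M.step_nonneg w v)

lemma pstep_hasSum (n : ℕ) (u : List A) : HasSum (M.pstep n u) 1 := by
  induction n with
  | zero => simpa [pstep, eq_comm] using hasSum_ite_eq u (1 : ℝ)
  | succ n ih =>
    exact ih.tsum_mul_of_hasSum_one (M.pstep_nonneg n u) M.step_nonneg M.step_hasSum

lemma summable_pstep_mul_step (n : ℕ) (u v : List A) :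
    Summable fun w => M.pstep n u w * M.step w v :=
  (M.pstep_hasSum n u).summable.of_nonneg_of_le
    (fun w => mul_nonneg (M.pstep_nonneg n u w) (M.step_nonneg w v))
    fun w => mul_le_of_le_one_right (M.pstep_nonneg n u w) (M.step_le_one w v)

lemma pstep_mul_pstep_le (m k : ℕ) (u w v : List A) :
    M.pstep m u w * M.pstep k w v ≤ M.pstep (m + k) u v := by
  induction k generalizing v with
  | zero => by_cases h : w = v <;> simp [pstep, h, M.pstep_nonneg]
  | succ k ih =>
    rw [← add_assoc, pstep, pstep, ← tsum_mul_left]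
    refine Summable.tsum_le_tsum (fun x => ?_) ((M.summable_pstep_mul_step k w v).mul_left _)
      (M.summable_pstep_mul_step (m + k) u v)
    rw [← mul_assoc]
    exact mul_le_mul_of_nonneg_right (ih x) (M.step_nonneg x v)

lemma exists_pos_of_pstep_succ_pos {n : ℕ} {u v : List A} (h : 0 < M.pstep (n + 1) u v) :
    ∃ w, 0 < M.pstep n u w ∧ 0 < M.step w v := by
  by_contra! hc
  have hzero : ∀ w, M.pstep n u w * M.step w v = 0 := fun w => by
    rcases (M.pstep_nonneg n u w).eq_or_lt with h0 | h0
    · rw [← h0, zero_mul]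
    · rw [le_antisymm (hc w h0) (M.step_nonneg w v), mul_zero]
  simp [pstep, hzero] at h

lemma exists_step_eq_p {u v : List A} (h : 0 < M.step u v) :
    ∃ x y : List A, x.length ≤ 3 ∧ y.length ≤ 3 ∧ M.step u v = M.p x y := by
  obtain ⟨w, x, y, rfl, rfl, hx, hyx, hxy⟩ := M.step_support u v h
  refine ⟨x, y, by omega, by omega, ?_⟩
  rcases le_or_gt 2 (w ++ x).length with hlong | hshort
  · exact M.step_long w x y (by omega) (by omega) (by omega)
  · obtain rfl : w = [] := List.eq_nil_of_length_eq_zero (by simp at hx hshort; omega)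
    exact M.step_short x y (by simp at hx hshort; omega) hyx

lemma exists_pos_le_step : ∃ ε > 0, ∀ u v, 0 < M.step u v → ε ≤ M.step u v := by
  set S := {q : List A × List A | q.1.length ≤ 3 ∧ q.2.length ≤ 3 ∧ 0 < M.p q.1 q.2}
  have hS : S.Finite := ((List.finite_length_le A 3).prod (List.finite_length_le A 3)).subset
    fun q hq => ⟨hq.1, hq.2.1⟩
  rcases S.eq_empty_or_nonempty with hempty | hne
  · refine ⟨1, one_pos, fun u v h => ?_⟩
    obtain ⟨x, y, hx, hy, hxy⟩ := M.exists_step_eq_p h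
    have hxyS : (x, y) ∈ S := ⟨hx, hy, hxy ▸ h⟩
    simp [hempty] at hxyS
  · obtain ⟨q, hq, hmin⟩ := S.exists_min_image (fun q => M.p q.1 q.2) hS hne
    refine ⟨M.p q.1 q.2, hq.2.2, fun u v h => ?_⟩
    obtain ⟨x, y, hx, hy, hxy⟩ := M.exists_step_eq_p h
    exact hxy ▸ hmin (x, y) ⟨hx, hy, hxy ▸ h⟩

lemma pow_le_pstep_swap (hWS : M.WeaklySymmetric) {ε : ℝ} (hε0 : 0 ≤ ε)
    (hε : ∀ u v, 0 < M.step u v → ε ≤ M.step u v) (n : ℕ) {u v : List A}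
    (h : 0 < M.pstep n u v) : ε ^ n ≤ M.pstep n v u := by
  induction n generalizing v with
  | zero =>
    by_cases huv : u = v
    · simp [pstep, huv]
    · simp [pstep, huv] at h
  | succ n ih =>
    obtain ⟨w, huw, hwv⟩ := M.exists_pos_of_pstep_succ_pos h
    calc ε ^ (n + 1) = ε * ε ^ n := pow_succ' ε n
      _ ≤ M.pstep 1 v w * M.pstep n w u := by
          rw [pstep_one]
          exact mul_le_mul (hε v w (hWS w v hwv)) (ih huw) (pow_nonneg hε0 n)
            (M.step_nonneg v w)
      _ ≤ M.pstep (n + 1) v u := by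
          rw [add_comm n 1]; exact M.pstep_mul_pstep_le 1 n v w u

end RLRW

theorem pstep_upper_bound_general
    {A : Type} [Fintype A] [DecidableEq A] (M : RLRW A)
    (hWS : M.WeaklySymmetric)
    (R : ℝ)
    (hG : ∀ w₁ ∈ M.Lang, ∀ w₂ ∈ M.Lang, Summable (fun n : ℕ => M.pstep n w₁ w₂ * R ^ n))
    (ϱ : ℝ) (hϱ₁ : 1 ≤ ϱ) (hϱR : ϱ < R) :
    ∃ D₁ D₂ : ℝ, 0 < D₁ ∧ 0 < D₂ ∧
      ∀ (m n : ℕ) (w : List A), 0 < M.pstep n [] w →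
        M.pstep m [] w ≤ D₁ * D₂ ^ n / ϱ ^ m := by
  obtain ⟨ε, hε, hεle⟩ := M.exists_pos_le_step
  have hR : 0 < R := by linarith
  have hnil : ([] : List A) ∈ M.Lang := ⟨0, by simp [RLRW.pstep]⟩
  set G := ∑' k : ℕ, M.pstep k [] [] * R ^ k
  have hGterm : ∀ k, M.pstep k [] [] * R ^ k ≤ G := fun k =>
    (hG [] hnil [] hnil).le_tsum k fun j _ => mul_nonneg (M.pstep_nonneg j [] []) (by positivity)
  have hG1 : 1 ≤ G := by simpa [RLRW.pstep] using hGterm 0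
  refine ⟨G, (R * ε)⁻¹, by linarith, by positivity, fun m n w hw => ?_⟩
  have hloop : M.pstep m [] w * ε ^ n ≤ M.pstep (m + n) [] [] :=
    (mul_le_mul_of_nonneg_left (M.pow_le_pstep_swap hWS hε.le hεle n hw)
      (M.pstep_nonneg m [] w)).trans (M.pstep_mul_pstep_le m n [] w [])
  rw [le_div_iff₀ (by positivity), inv_pow, mul_pow, ← div_eq_mul_inv,
    le_div_iff₀ (by positivity)]
  calc M.pstep m [] w * ϱ ^ m * (R ^ n * ε ^ n)
      ≤ M.pstep m [] w * R ^ m * (R ^ n * ε ^ n) := by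
        gcongr
        exact M.pstep_nonneg m [] w
    _ = M.pstep m [] w * ε ^ n * R ^ (m + n) := by ring
    _ ≤ M.pstep (m + n) [] [] * R ^ (m + n) := by gcongr
    _ ≤ G := hGterm (m + n)

/-- For a transient, weakly symmetric, suffix-irreducible random walk
on a regular language, if `R > 1` is such that all Green functions converge at `R` and
`ϱ ∈ [1, R)`, then there are constants `D₁, D₂ > 0` such that for all `m, n ∈ ℕ₀` and
every word `w` with `P[X_n = w] > 0` one has `p⁽ᵐ⁾(o,w) ≤ D₁·D₂ⁿ·ϱ^{-m}`. -/
theorem pstep_upper_bound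
    {A : Type} [Fintype A] [DecidableEq A] (M : RLRW A)
    (hT : M.Transient) (hWS : M.WeaklySymmetric) (hSI : M.SuffixIrreducible)
    (R : ℝ) (hR : 1 < R)
    (hG : ∀ w₁ ∈ M.Lang, ∀ w₂ ∈ M.Lang, Summable (fun n : ℕ => M.pstep n w₁ w₂ * R ^ n))
    (ϱ : ℝ) (hϱ₁ : 1 ≤ ϱ) (hϱR : ϱ < R) :
    ∃ D₁ D₂ : ℝ, 0 < D₁ ∧ 0 < D₂ ∧
      ∀ (m n : ℕ) (w : List A), 0 < M.pstep n [] w →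
        M.pstep m [] w ≤ D₁ * D₂ ^ n / ϱ ^ m :=
  pstep_upper_bound_general M hWS R hG ϱ hϱ₁ hϱR
end

section
/- Let (X_n)_{n≥0} be a transient, weakly symmetric, suffix-irreducible random walk on a regular language over a finite alphabet 𝒜. Then there exist real constants d and D such that for all n ∈ ℕ and all w ∈ ℒ with p^{(n)}(o, w) > 0: d ≤ −(1/n)·log Σ_{m=0}^{n²} p^{(m)}(o, w) ≤ D. -/
open MeasureTheory Filter Topology
open scoped ENNReal Classical

section Aux

variable {A : Type} [Fintype A] [DecidableEq A] (M : RLRW A)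

lemma step_le_one (u v : List A) : M.step u v ≤ 1 :=
  le_hasSum (M.step_hasSum u) v fun _ _ => M.step_nonneg u _

lemma pstep_nonneg : ∀ (n : ℕ) (u v : List A), 0 ≤ M.pstep n u v
  | 0, u, v => by
      unfold RLRW.pstep; split <;> norm_num
  | (n+1), u, v => by
      unfold RLRW.pstep
      exact tsum_nonneg fun w => mul_nonneg (pstep_nonneg n u w) (M.step_nonneg w v)

lemma pstep_hasSum (n : ℕ) : ∀ u : List A, HasSum (M.pstep n u) 1 := by
  induction n with
  | zero =>
      intro u
      have h0 : M.pstep 0 u = fun v => if u = v then (1:ℝ) else 0 := rfl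
      rw [h0]
      simpa [eq_comm] using hasSum_ite_eq u (1:ℝ)
  | succ n ih =>
      intro u
      set f : List A × List A → ℝ := fun q => M.pstep n u q.1 * M.step q.1 q.2 with hf
      have hfib : ∀ w, HasSum (fun v => f (w, v)) (M.pstep n u w) := fun w => by
        simpa using (M.step_hasSum w).mul_left (M.pstep n u w)
      have hnn : 0 ≤ f := fun q => mul_nonneg (pstep_nonneg M n u q.1) (M.step_nonneg q.1 q.2)
      have hsumf : Summable f := by
        refine (summable_prod_of_nonneg hnn).2 ⟨fun w => (hfib w).summable, ?_⟩
        have h1 : (fun w => ∑' v, f (w, v)) = fun w => M.pstep n u w :=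
          funext fun w => (hfib w).tsum_eq
        rw [h1]; exact (ih u).summable
      have htot : ∑' q, f q = 1 := by
        calc ∑' q, f q = ∑' w, ∑' v, f (w, v) :=
              Summable.tsum_prod' hsumf fun w => (hfib w).summable
          _ = ∑' w, M.pstep n u w := tsum_congr fun w => (hfib w).tsum_eq
          _ = 1 := (ih u).tsum_eq
      have hg : Summable fun q : List A × List A => f q.swap :=
        ((Equiv.prodComm (List A) (List A)).summable_iff).2 hsumf
      have hgt : ∑' q : List A × List A, f q.swap = 1 := by
        rw [← htot]; exact (Equiv.prodComm (List A) (List A)).tsum_eq f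
      have hg1 : HasSum (fun q : List A × List A => f q.swap) 1 := by
        have h' := hg.hasSum
        rwa [hgt] at h'
      have hmain : HasSum (fun v => ∑' w, f (w, v)) 1 :=
        HasSum.prod_fiberwise hg1 fun v => (hg.prod_factor v).hasSum
      have h1 : M.pstep (n + 1) u = fun v => ∑' w', M.pstep n u w' * M.step w' v := rfl
      rw [h1]
      exact hmain

lemma pstep_le_one (n : ℕ) (u v : List A) : M.pstep n u v ≤ 1 :=
  le_hasSum (pstep_hasSum M n u) v fun _ _ => pstep_nonneg M n u _

lemma summable_mul_step (n : ℕ) (u v : List A) :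
    Summable fun w => M.pstep n u w * M.step w v := by
  refine Summable.of_nonneg_of_le
    (fun w => mul_nonneg (pstep_nonneg M n u w) (M.step_nonneg w v))
    (fun w => ?_) (pstep_hasSum M n u).summable
  exact mul_le_of_le_one_right (pstep_nonneg M n u w) (step_le_one M w v)

lemma exists_eps : ∃ ε : ℝ, 0 < ε ∧ ε ≤ 1 ∧ ∀ u v, 0 < M.step u v → ε ≤ M.step u v := by
  have h2 : ({l : List A | l.length ≤ 2}).Finite := List.finite_length_le A 2
  have h3 : ({l : List A | l.length ≤ 3}).Finite := List.finite_length_le A 3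
  set T : Finset ℝ :=
    insert 1 ((h2.toFinset ×ˢ h3.toFinset).image fun q => M.p q.1 q.2) with hT
  set T' : Finset ℝ := T.filter (fun r => 0 < r) with hT'
  have hne : T'.Nonempty := ⟨1, by simp [hT', hT]⟩
  refine ⟨T'.min' hne, ?_, ?_, ?_⟩
  · have := T'.min'_mem hne
    exact (Finset.mem_filter.1 this).2
  · exact T'.min'_le 1 (by simp [hT', hT])
  · intro u v h
    obtain ⟨w, x, y, hu, hv, hx, hy1, hy2⟩ := M.step_support u v h
    have hstep : M.step u v = M.p x y := by
      rcases le_or_gt u.length 1 with hl | hl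
      · have hxlen : x.length = u.length := by
          rw [hx]; exact Nat.min_eq_left (by omega)
        have hw : w = [] := by
          have hlen := congrArg List.length hu
          rw [List.length_append] at hlen
          have : w.length = 0 := by omega
          exact List.length_eq_zero_iff.1 this
        subst hw
        simp only [List.nil_append] at hu hv
        rw [hu, hv]
        exact M.step_short x y (by omega) (by omega)
      · have hxlen : x.length = 2 := by
          rw [hx]; exact Nat.min_eq_right (by omega)
        rw [hu, hv]
        exact M.step_long w x y hxlen (by omega) (by omega)
    have hx2 : x.length ≤ 2 := by rw [hx]; exact min_le_right _ _
    have hy3 : y.length ≤ 3 := by omega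
    rw [hstep]
    apply T'.min'_le
    rw [hT', Finset.mem_filter]
    refine ⟨?_, ?_⟩
    · rw [hT]
      apply Finset.mem_insert_of_mem
      refine Finset.mem_image.2 ⟨(x, y), ?_, rfl⟩
      rw [Finset.mem_product]
      exact ⟨h2.mem_toFinset.2 hx2, h3.mem_toFinset.2 hy3⟩
    · rw [← hstep]; exact h

lemma pstep_lower (ε : ℝ) (hε0 : 0 ≤ ε)
    (hε : ∀ u v, 0 < M.step u v → ε ≤ M.step u v) :
    ∀ (n : ℕ) (u v : List A), 0 < M.pstep n u v → ε ^ n ≤ M.pstep n u v := by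
  intro n
  induction n with
  | zero =>
      intro u v h
      unfold RLRW.pstep at h ⊢
      split at h
      · split
        · simp
        · simp_all
      · exact absurd h (lt_irrefl 0)
  | succ n ih =>
      intro u v h
      unfold RLRW.pstep at h ⊢
      have hex : ∃ w, 0 < M.pstep n u w * M.step w v := by
        by_contra hc
        push_neg at hc
        have hz : ∀ w, M.pstep n u w * M.step w v = 0 := fun w =>
          le_antisymm (hc w) (mul_nonneg (pstep_nonneg M n u w) (M.step_nonneg w v))
        simp only [hz, tsum_zero] at h
        exact lt_irrefl 0 h
      obtain ⟨w, hw⟩ := hex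
      have h1 : 0 < M.pstep n u w := by
        rcases mul_pos_iff.1 hw with ⟨ha, _⟩ | ⟨ha, hb⟩
        · exact ha
        · exact absurd hb (not_lt.2 (M.step_nonneg w v))
      have h2 : 0 < M.step w v := by
        rcases mul_pos_iff.1 hw with ⟨_, hb⟩ | ⟨ha, _⟩
        · exact hb
        · exact absurd ha (not_lt.2 (pstep_nonneg M n u w))
      calc ε ^ (n + 1) = ε ^ n * ε := pow_succ ε n
        _ ≤ M.pstep n u w * M.step w v :=
            mul_le_mul (ih u w h1) (hε w v h2) hε0 (pstep_nonneg M n u w)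
        _ ≤ ∑' w', M.pstep n u w' * M.step w' v :=
            Summable.le_tsum (summable_mul_step M n u v) w
              (fun w' _ => mul_nonneg (pstep_nonneg M n u w') (M.step_nonneg w' v))

end Aux

/-- For a transient, weakly symmetric, suffix-irreducible random walk
on a regular language, there are constants `d` and `D` such that for all `n ∈ ℕ` and
all `w ∈ ℒ` with `p⁽ⁿ⁾(o,w) > 0`:
`d ≤ -(1/n)·log ∑_{m=0}^{n²} p⁽ᵐ⁾(o,w) ≤ D`. -/
theorem partial_green_sum_bounds
    {A : Type} [Fintype A] [DecidableEq A] (M : RLRW A)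
    (hT : M.Transient) (hWS : M.WeaklySymmetric) (hSI : M.SuffixIrreducible) :
    ∃ d D : ℝ, ∀ n : ℕ, 1 ≤ n → ∀ w : List A, 0 < M.pstep n [] w →
      d ≤ -(1 / (n : ℝ)) * Real.log (∑ m ∈ Finset.range (n ^ 2 + 1), M.pstep m [] w) ∧
      -(1 / (n : ℝ)) * Real.log (∑ m ∈ Finset.range (n ^ 2 + 1), M.pstep m [] w) ≤ D := by
  obtain ⟨ε, hε0, hε1, hεstep⟩ := exists_eps M
  refine ⟨-2, -Real.log ε, ?_⟩
  intro n hn w hw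
  set S := ∑ m ∈ Finset.range (n ^ 2 + 1), M.pstep m [] w with hSdef
  have hn' : (0:ℝ) < n := by exact_mod_cast hn
  have hmem : n ∈ Finset.range (n ^ 2 + 1) := by
    rw [Finset.mem_range]
    exact Nat.lt_succ_of_le (Nat.le_self_pow two_ne_zero n)
  have hS_lb : ε ^ n ≤ S := by
    refine le_trans (pstep_lower M ε hε0.le hεstep n [] w hw) ?_
    exact Finset.single_le_sum (fun m _ => pstep_nonneg M m [] w) hmem
  have hS_pos : 0 < S := lt_of_lt_of_le (pow_pos hε0 n) hS_lb
  have hS_ub : S ≤ ((n:ℝ) ^ 2 + 1) := by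
    calc S ≤ ∑ m ∈ Finset.range (n ^ 2 + 1), (1:ℝ) :=
          Finset.sum_le_sum fun m _ => pstep_le_one M m [] w
      _ = ((n:ℝ) ^ 2 + 1) := by rw [Finset.sum_const, Finset.card_range]; push_cast; ring
  constructor
  · have hexp : ((n:ℝ) ^ 2 + 1) ≤ Real.exp (2 * n) := by
      have e1 : (n:ℝ) + 1 ≤ Real.exp n := Real.add_one_le_exp n
      have e2 : ((n:ℝ) ^ 2 + 1) ≤ ((n:ℝ) + 1) ^ 2 := by nlinarith [hn'.le]
      have e3 : ((n:ℝ) + 1) ^ 2 ≤ (Real.exp n) ^ 2 := by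
        apply pow_le_pow_left₀ (by positivity) e1
      have e4 : (Real.exp n) ^ 2 = Real.exp (2 * n) := by
        rw [sq, ← Real.exp_add]; ring_nf
      linarith
    have hlog : Real.log S ≤ 2 * n := by
      rw [Real.log_le_iff_le_exp hS_pos]
      exact le_trans hS_ub hexp
    have : Real.log S / n ≤ 2 := by
      rw [div_le_iff₀ hn']
      linarith
    have heq : -(1 / (n:ℝ)) * Real.log S = -(Real.log S / n) := by ring
    rw [heq]
    linarith
  · have hlog : (n:ℝ) * Real.log ε ≤ Real.log S := by
      have := Real.log_le_log (pow_pos hε0 n) hS_lb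
      rwa [Real.log_pow] at this
    have heq : -(1 / (n:ℝ)) * Real.log S = -(Real.log S / n) := by ring
    rw [heq]
    have : Real.log ε ≤ Real.log S / n := by
      rw [le_div_iff₀ hn']
      linarith
    linarith
end
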